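/- Let P1, P2 be the laws of length-n stationary geometric-sticky Markov chains with parameter α and base distributions p(0,L) and p(β,L) respectively, where p(γ,L) assigns 0.5+γ to letter 1 and (0.5−γ)/L to each of letters 2,…,L+1. Then D_KL(P1 ∥ P2) ≤ −0.5·[1 + (n−1)(1−α)]·ln(1 − 4β²), and consequently ∥P1 − P2∥_TV ≤ √2·β·(1 + 0.5(n−1)(1−α))^{1/2} for β ∈ (0, 0.5). -/

import Mathlib

open scoped Classical

set_option linter.unusedSectionVars false
set_option maxHeartbeats 1000000

/-- The probability that the stationary geometric-sticky Markov chain with stickiness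
parameter `α` and base distribution `p` (i.e. `X_1 ~ p` and
`Pr(X_i = z | X_{i-1} = y) = α·1[z=y] + (1-α)·p z`) produces the sample path `x`. -/
noncomputable def stickyProb {X : Type*} [DecidableEq X] (α : ℝ) (p : X → ℝ) {n : ℕ}
    (x : Fin n → X) : ℝ :=
  (if h : 0 < n then p (x ⟨0, h⟩) else 1) *
  ∏ i : Fin n, if i.val = 0 then 1 else
    ((if x i = x ⟨i.val - 1, lt_of_le_of_lt (Nat.pred_le _) i.isLt⟩ then α else 0)
      + (1 - α) * p (x i))

section Infra
variable {X : Type*} [DecidableEq X] (α : ℝ) (p : X → ℝ)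

lemma sticky_one (x : Fin 1 → X) : stickyProb α p x = p (x 0) := by
  simp [stickyProb]

lemma sticky_snoc {n : ℕ} (hn : 0 < n) (y : Fin n → X) (z : X) :
    stickyProb α p (Fin.snoc y z) =
      stickyProb α p y *
        ((if z = y ⟨n - 1, by omega⟩ then α else 0) + (1 - α) * p z) := by
  unfold stickyProb
  rw [dif_pos (by omega : 0 < n + 1), dif_pos hn, Fin.prod_univ_castSucc]
  have h0 : (⟨0, by omega⟩ : Fin (n+1)) = Fin.castSucc ⟨0, hn⟩ := rfl
  rw [h0, Fin.snoc_castSucc]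
  have hterm : ∀ i : Fin n,
      (if (Fin.castSucc i).val = 0 then (1:ℝ) else
        ((if (Fin.snoc y z : Fin (n+1) → X) (Fin.castSucc i) =
            (Fin.snoc y z : Fin (n+1) → X) ⟨(Fin.castSucc i).val - 1,
              lt_of_le_of_lt (Nat.pred_le _) (Fin.castSucc i).isLt⟩ then α else 0)
          + (1 - α) * p ((Fin.snoc y z : Fin (n+1) → X) (Fin.castSucc i)))) =
      (if i.val = 0 then (1:ℝ) else
        ((if y i = y ⟨i.val - 1, lt_of_le_of_lt (Nat.pred_le _) i.isLt⟩ then α else 0)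
          + (1 - α) * p (y i))) := by
    intro i
    by_cases hi : i.val = 0
    · simp [hi]
    · have h1 : (⟨(Fin.castSucc i).val - 1, lt_of_le_of_lt (Nat.pred_le _) (Fin.castSucc i).isLt⟩ : Fin (n+1))
          = Fin.castSucc ⟨i.val - 1, lt_of_le_of_lt (Nat.pred_le _) i.isLt⟩ := rfl
      rw [if_neg (by simpa using hi), if_neg hi, h1, Fin.snoc_castSucc, Fin.snoc_castSucc]
  rw [Finset.prod_congr rfl (fun i _ => hterm i)]
  have hlast : (if (Fin.last n).val = 0 then (1:ℝ) else
        ((if (Fin.snoc y z : Fin (n+1) → X) (Fin.last n) =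
            (Fin.snoc y z : Fin (n+1) → X) ⟨(Fin.last n).val - 1,
              lt_of_le_of_lt (Nat.pred_le _) (Fin.last n).isLt⟩ then α else 0)
          + (1 - α) * p ((Fin.snoc y z : Fin (n+1) → X) (Fin.last n)))) =
      ((if z = y ⟨n - 1, by omega⟩ then α else 0) + (1 - α) * p z) := by
    have hne : (Fin.last n).val ≠ 0 := by simp [Fin.last]; omega
    rw [if_neg hne, Fin.snoc_last]
    have h2 : (⟨(Fin.last n).val - 1, lt_of_le_of_lt (Nat.pred_le _) (Fin.last n).isLt⟩ : Fin (n+1))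
        = Fin.castSucc ⟨n - 1, by omega⟩ := rfl
    rw [h2, Fin.snoc_castSucc]
  rw [hlast]
  ring

lemma sum_snoc {n : ℕ} [Fintype X] (f : (Fin (n+1) → X) → ℝ) :
    ∑ x : Fin (n+1) → X, f x = ∑ y : Fin n → X, ∑ z : X, f (Fin.snoc y z) := by
  calc ∑ x : Fin (n+1) → X, f x
      = ∑ yz : (Fin n → X) × X, f (Fin.snoc yz.1 yz.2) :=
        (Fintype.sum_equiv
          { toFun := fun yz => Fin.snoc yz.1 yz.2
            invFun := fun x => (Fin.init x, x (Fin.last n))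
            left_inv := fun yz => by simp
            right_inv := fun x => by simp }
          _ _ (fun yz => rfl)).symm
    _ = ∑ y : Fin n → X, ∑ z : X, f (Fin.snoc y z) := Fintype.sum_prod_type _

lemma sticky_pos {n : ℕ} (hα0 : 0 ≤ α) (hα1 : α < 1) (hp : ∀ z, 0 < p z)
    (x : Fin n → X) : 0 < stickyProb α p x := by
  unfold stickyProb
  apply mul_pos
  · split
    · exact hp _
    · norm_num
  · apply Finset.prod_pos
    intro i _
    split
    · norm_num
    · have : (0:ℝ) ≤ (if x i = x ⟨i.val - 1, lt_of_le_of_lt (Nat.pred_le _) i.isLt⟩ then α else 0) := by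
        split <;> simp [hα0]
      nlinarith [hp (x i), mul_pos (by linarith : (0:ℝ) < 1 - α) (hp (x i))]

lemma sum_trans [Fintype X] (hp : ∑ z, p z = 1) (w : X) :
    ∑ z : X, ((if z = w then α else 0) + (1 - α) * p z) = 1 := by
  rw [Finset.sum_add_distrib, Finset.sum_ite_eq' Finset.univ w (fun _ => α), ← Finset.mul_sum, hp]
  simp

lemma sticky_sum_one {n : ℕ} [Fintype X] (hn : 1 ≤ n) (hp : ∑ z, p z = 1) :
    ∑ x : Fin n → X, stickyProb α p x = 1 := by
  induction n, hn using Nat.le_induction with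
  | base =>
    rw [Fintype.sum_equiv (Equiv.funUnique (Fin 1) X) (fun x => stickyProb α p x) p
      (fun x => sticky_one α p x)]
    exact hp
  | succ n hn ih =>
    rw [sum_snoc]
    calc ∑ y : Fin n → X, ∑ z : X, stickyProb α p (Fin.snoc y z)
        = ∑ y : Fin n → X, stickyProb α p y *
            ∑ z : X, ((if z = y ⟨n - 1, by omega⟩ then α else 0) + (1 - α) * p z) := by
          refine Finset.sum_congr rfl (fun y _ => ?_)
          rw [Finset.mul_sum]
          exact Finset.sum_congr rfl (fun z _ => sticky_snoc α p (by omega) y z)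
      _ = ∑ y : Fin n → X, stickyProb α p y := by
          refine Finset.sum_congr rfl (fun y _ => ?_)
          rw [sum_trans α p hp, mul_one]
      _ = 1 := ih

end Infra

section Scalar
open Real

lemma logsum2 {α c d : ℝ} (hα : 0 ≤ α) (hc : 0 < c) (hd : 0 < d) :
    (α + c) * Real.log ((α + c) / (α + d)) ≤ c * Real.log (c / d) := by
  have hA : 0 < α + c := by linarith
  have hB : 0 < α + d := by linarith
  have b1 : Real.log ((α + c) / (α + d)) ≤ (α + c) / (α + d) - 1 :=
    Real.log_le_sub_one_of_pos (div_pos hA hB)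
  have b2 : Real.log ((α + c) * d / ((α + d) * c)) ≤ (α + c) * d / ((α + d) * c) - 1 :=
    Real.log_le_sub_one_of_pos (div_pos (mul_pos hA hd) (mul_pos hB hc))
  have e1 : Real.log ((α + c) / (α + d)) = Real.log (α + c) - Real.log (α + d) :=
    Real.log_div hA.ne' hB.ne'
  have e2 : Real.log (c / d) = Real.log c - Real.log d := Real.log_div hc.ne' hd.ne'
  have e3 : Real.log ((α + c) * d / ((α + d) * c))
      = Real.log (α + c) + Real.log d - (Real.log (α + d) + Real.log c) := by
    rw [Real.log_div (mul_pos hA hd).ne' (mul_pos hB hc).ne',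
      Real.log_mul hA.ne' hd.ne', Real.log_mul hB.ne' hc.ne']
  have h1 : α * (Real.log (α + c) - Real.log (α + d)) ≤ α * ((α + c) / (α + d) - 1) := by
    apply mul_le_mul_of_nonneg_left _ hα
    rw [← e1]; exact b1
  have h2 : c * (Real.log (α + c) + Real.log d - (Real.log (α + d) + Real.log c))
      ≤ c * ((α + c) * d / ((α + d) * c) - 1) := by
    apply mul_le_mul_of_nonneg_left _ hc.le
    rw [← e3]; exact b2
  have key : α * ((α + c) / (α + d) - 1) + c * ((α + c) * d / ((α + d) * c) - 1) = 0 := by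
    field_simp
    ring
  rw [e1, e2]
  nlinarith [h1, h2, key]

lemma pow_lb {a : ℝ} (ha : 0 ≤ a) (ha1 : a ≤ 1) :
    ∀ m : ℕ, 2 ≤ m → a * m ≤ 3/2 → (1 - a * m / 2)^2 ≤ (1 - a)^m := by
  intro m hm
  induction m, hm using Nat.le_induction with
  | base => intro _; push_cast; ring_nf; nlinarith
  | succ m hm ih =>
    intro h
    have hmR : (2:ℝ) ≤ (m:ℝ) := by exact_mod_cast hm
    have hm' : a * m ≤ 3/2 := by push_cast at h; nlinarith
    have h1 := ih hm'
    have hs : a ≤ a * m / 2 := by nlinarith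
    have hs2 : a * m / 2 ≤ 3/4 := by linarith
    have hsnn : (0:ℝ) ≤ a * m / 2 := by positivity
    have hpow : (0:ℝ) ≤ (1-a)^m := pow_nonneg (by linarith) m
    have key : (1 - a * ((m:ℝ)+1) / 2)^2 ≤ (1 - a * m / 2)^2 * (1 - a) := by
      nlinarith [mul_nonneg ha (sub_nonneg.2 hs), mul_nonneg (mul_nonneg ha hsnn) (sub_nonneg.2 hs2)]
    have h3 : (1 - a * ((m:ℝ)+1) / 2)^2 ≤ (1-a)^m * (1-a) := by
      nlinarith [mul_le_mul_of_nonneg_right h1 (by linarith : (0:ℝ) ≤ 1-a)]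
    calc (1 - a * (↑(m+1):ℝ) / 2)^2 = (1 - a * ((m:ℝ)+1)/2)^2 := by push_cast; ring
      _ ≤ (1-a)^m * (1-a) := h3
      _ = (1-a)^(m+1) := by ring

lemma sc1 {β c : ℝ} (hb : 0.49 ≤ β) (hb2 : β ≤ 0.5) (hc : 0 ≤ c) (hc1 : c ≤ 1) :
    (1 + c * (1 - β))^2 ≤ 2 + c := by
  have h0 : 0 ≤ c*(1-β) := mul_nonneg hc (by linarith)
  have h2 : c*(1-β) ≤ 0.51 := by nlinarith
  have h1 : c*(1-β)*(c*(1-β)) ≤ 0.2601 := by nlinarith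
  nlinarith

lemma sc2 {β c R : ℝ} (hb : 0.49 ≤ β) (hb2 : β ≤ 0.5) (hc : 1 ≤ c)
    (hT : β^2 * (2 + c) ≤ 1) (hR : 0 ≤ R) (hR2 : R^2 = 2 + c) :
    1 - (1 - β) * (1 - c * β / 2)^2 ≤ β * R := by
  have hbR : β * R ≤ 1 := by nlinarith
  have hR14 : 1.41 ≤ R := by nlinarith
  nlinarith [sq_nonneg (1 - c*β/2), sq_nonneg (β*R - 1), sq_nonneg (R - 1.8), mul_pos (by linarith : (0:ℝ) < β) (by linarith : (0:ℝ) < R)]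

lemma sc3 {ρ : ℝ} (h1 : 0.7742 ≤ ρ) (h2 : ρ ≤ 1) :
    (2 - (ρ^2 + ρ^3))^2 ≤ 4 * (1 - ρ) * (ρ^2 + ρ^3) := by
  nlinarith [sq_nonneg (1 - ρ), sq_nonneg ρ, mul_nonneg (sub_nonneg.2 h1) (sub_nonneg.2 h2), sq_nonneg (ρ - 0.9)]

lemma sc4 {ρ : ℝ} (h1 : 0.7742 ≤ ρ) (h2 : ρ ≤ 1) :
    1 ≤ ρ^2 * (1 + ρ) * (2 - ρ) := by
  nlinarith [mul_nonneg (sq_nonneg (ρ-0.7742)) (sub_nonneg.2 h2),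
    mul_nonneg (mul_nonneg (sub_nonneg.2 h1) (sub_nonneg.2 h2)) (sub_nonneg.2 h2),
    sq_nonneg (ρ-0.7742), sub_nonneg.2 h1, sub_nonneg.2 h2]

end Scalar

/-- The distribution `p(γ, L)` on `{1, …, L+1}` assigning mass `0.5 + γ` to letter `1`
(index `0`) and `(0.5 - γ)/L` to each of the other `L` letters. -/
noncomputable def pGamma (γ : ℝ) (L : ℕ) : Fin (L + 1) → ℝ :=
  fun i => if i = 0 then 0.5 + γ else (0.5 - γ) / L

section PG
variable {L : ℕ} {β : ℝ}

lemma pg_zero (γ : ℝ) : pGamma γ L 0 = 0.5 + γ := by simp [pGamma]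

lemma pg_succ (γ : ℝ) (i : Fin L) : pGamma γ L i.succ = (0.5 - γ) / L := by
  simp [pGamma, Fin.succ_ne_zero]

lemma sum_fin (g : Fin (L+1) → ℝ) (k : ℝ) (hk : ∀ i : Fin L, g i.succ = k) :
    ∑ z, g z = g 0 + L * k := by
  rw [Fin.sum_univ_succ]
  simp [hk, Finset.sum_const, mul_comm]

variable (hL : 1 ≤ L) (hβ0 : 0 < β) (hβ1 : β < 0.5)
include hL hβ0 hβ1

lemma pg_pos : ∀ z, 0 < pGamma β L z ∧ 0 < pGamma 0 L z := by
  have hLp : (0:ℝ) < L := by exact_mod_cast hL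
  intro z
  constructor <;>
  · rcases Fin.eq_zero_or_eq_succ z with h | ⟨i, h⟩ <;> subst h
    · rw [pg_zero]; linarith
    · rw [pg_succ]
      apply div_pos (by linarith) hLp

lemma pg_sum : ∑ z, pGamma β L z = 1 := by
  have hLp : (0:ℝ) < L := by exact_mod_cast hL
  rw [sum_fin _ ((0.5 - β)/L) (fun i => pg_succ β i), pg_zero]
  field_simp
  ring

lemma pg_min_sum : ∑ z, min (pGamma 0 L z) (pGamma β L z) = 1 - β := by
  have hLp : (0:ℝ) < L := by exact_mod_cast hL
  have hk : ∀ i : Fin L, min (pGamma 0 L i.succ) (pGamma β L i.succ) = (0.5 - β)/L := by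
    intro i
    rw [pg_succ, pg_succ, min_eq_right ((div_le_div_iff_of_pos_right hLp).mpr (by linarith))]
  rw [sum_fin _ ((0.5 - β)/L) hk, pg_zero, pg_zero,
    min_eq_left (by norm_num; linarith)]
  field_simp
  ring

lemma pg_rho_sum : ∑ z, Real.sqrt (pGamma 0 L z * pGamma β L z)
    = Real.sqrt (0.5 * (0.5 + β)) + Real.sqrt (0.5 * (0.5 - β)) := by
  have hLp : (0:ℝ) < L := by exact_mod_cast hL
  have hk : ∀ i : Fin L, Real.sqrt (pGamma 0 L i.succ * pGamma β L i.succ)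
      = Real.sqrt (0.5 * (0.5 - β)) / L := by
    intro i
    rw [pg_succ, pg_succ,
      show (0.5 - 0)/(L:ℝ) * ((0.5 - β)/L) = (0.5 * (0.5 - β)) / (L:ℝ)^2 by ring,
      Real.sqrt_div (by nlinarith), Real.sqrt_sq hLp.le]
  rw [sum_fin _ _ hk, pg_zero, pg_zero, mul_div_cancel₀ _ hLp.ne']
  norm_num

lemma pg_D : ∑ z, pGamma 0 L z * Real.log (pGamma 0 L z / pGamma β L z)
    = -(1/2) * Real.log (1 - 4*β^2) := by
  have hLp : (0:ℝ) < L := by exact_mod_cast hL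
  have h1 : (0:ℝ) < 0.5 + β := by linarith
  have h2 : (0:ℝ) < 0.5 - β := by linarith
  have hk : ∀ i : Fin L, pGamma 0 L i.succ * Real.log (pGamma 0 L i.succ / pGamma β L i.succ)
      = (0.5/L) * Real.log (0.5 / (0.5 - β)) := by
    intro i
    rw [pg_succ, pg_succ,
      show ((0.5 - 0:ℝ)/(L:ℝ)) / ((0.5 - β)/L) = 0.5 / (0.5 - β) by field_simp; norm_num]
    norm_num
  rw [sum_fin _ _ hk, pg_zero, pg_zero]
  have e2 : (L:ℝ) * (0.5/L * Real.log (0.5/(0.5-β))) = 0.5 * Real.log (0.5/(0.5-β)) := by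
    field_simp
  rw [show (0.5 + 0 : ℝ) = 0.5 by norm_num, e2, ← mul_add,
    ← Real.log_mul (by positivity) (by positivity)]
  have h3 : (0:ℝ) < 1 - 4*β^2 := by nlinarith
  have e3 : (0.5:ℝ)/(0.5+β) * (0.5/(0.5-β)) = (1 - 4*β^2)⁻¹ := by
    rw [div_mul_div_comm, ← one_div, div_eq_div_iff (mul_pos h1 h2).ne' h3.ne']
    ring
  rw [e3, Real.log_inv]
  ring

end PG

section Steps
open Real
variable {L : ℕ} {α β : ℝ}
  (hα0 : 0 ≤ α) (hα1 : α < 1) (hβ0 : 0 < β) (hβ1 : β < 0.5) (hL : 1 ≤ L)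

-- positivity of transition terms
lemma trans_pos (hα0 : 0 ≤ α) (hα1 : α < 1) {p : Fin (L+1) → ℝ} (hp : ∀ z, 0 < p z)
    (w z : Fin (L+1)) : 0 < (if z = w then α else 0) + (1-α) * p z := by
  have h1 : (0:ℝ) ≤ (if z = w then α else 0) := by split <;> simp [hα0]
  nlinarith [mul_pos (by linarith : (0:ℝ) < 1 - α) (hp z)]

include hα0 hα1 hβ0 hβ1 hL

-- KL per-step bound
lemma kl_step (w : Fin (L+1)) :
    ∑ z, ((if z = w then α else 0) + (1-α) * pGamma 0 L z) *
        Real.log (((if z = w then α else 0) + (1-α) * pGamma 0 L z)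
          / ((if z = w then α else 0) + (1-α) * pGamma β L z))
      ≤ (1-α) * ∑ z, pGamma 0 L z * Real.log (pGamma 0 L z / pGamma β L z) := by
  rw [Finset.mul_sum]
  apply Finset.sum_le_sum
  intro z _
  have hp1 : 0 < pGamma 0 L z := (pg_pos hL hβ0 hβ1 z).2
  have hp2 : 0 < pGamma β L z := (pg_pos hL hβ0 hβ1 z).1
  have hu : (0:ℝ) < 1 - α := by linarith
  have hc : 0 < (1-α) * pGamma 0 L z := mul_pos hu hp1
  have hd : 0 < (1-α) * pGamma β L z := mul_pos hu hp2
  have hratio : ((1-α) * pGamma 0 L z) / ((1-α) * pGamma β L z)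
      = pGamma 0 L z / pGamma β L z := mul_div_mul_left _ _ hu.ne'
  by_cases hzw : z = w
  · rw [if_pos hzw]
    have := logsum2 hα0 hc hd
    rw [hratio] at this
    calc (α + (1-α) * pGamma 0 L z) *
          Real.log ((α + (1-α) * pGamma 0 L z) / (α + (1-α) * pGamma β L z))
        ≤ ((1-α) * pGamma 0 L z) * Real.log (pGamma 0 L z / pGamma β L z) := this
      _ = (1-α) * (pGamma 0 L z * Real.log (pGamma 0 L z / pGamma β L z)) := by ring
  · rw [if_neg hzw]
    rw [zero_add, zero_add, hratio]
    ring_nf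
    exact le_refl _

-- Hellinger per-step bound
lemma hell_step (w : Fin (L+1)) :
    1 - (1-α) * (1 - (Real.sqrt (0.5 * (0.5 + β)) + Real.sqrt (0.5 * (0.5 - β))))
      ≤ ∑ z, Real.sqrt (((if z = w then α else 0) + (1-α) * pGamma 0 L z)
          * ((if z = w then α else 0) + (1-α) * pGamma β L z)) := by
  have hu : (0:ℝ) < 1 - α := by linarith
  have key : ∀ z, (if z = w then α else 0) + (1-α) * Real.sqrt (pGamma 0 L z * pGamma β L z)
      ≤ Real.sqrt (((if z = w then α else 0) + (1-α) * pGamma 0 L z)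
          * ((if z = w then α else 0) + (1-α) * pGamma β L z)) := by
    intro z
    have hp1 : 0 < pGamma 0 L z := (pg_pos hL hβ0 hβ1 z).2
    have hp2 : 0 < pGamma β L z := (pg_pos hL hβ0 hβ1 z).1
    have hsq : Real.sqrt (pGamma 0 L z * pGamma β L z) ^ 2 = pGamma 0 L z * pGamma β L z :=
      Real.sq_sqrt (by positivity)
    have hsnn : 0 ≤ Real.sqrt (pGamma 0 L z * pGamma β L z) := Real.sqrt_nonneg _
    have hamgm : 2 * Real.sqrt (pGamma 0 L z * pGamma β L z) ≤ pGamma 0 L z + pGamma β L z := by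
      nlinarith [sq_nonneg (Real.sqrt (pGamma 0 L z * pGamma β L z) - pGamma 0 L z),
        Real.sqrt_le_sqrt (show pGamma 0 L z * pGamma β L z ≤ ((pGamma 0 L z + pGamma β L z)/2)^2 by nlinarith [sq_nonneg (pGamma 0 L z - pGamma β L z)]),
        Real.sqrt_sq (by positivity : (0:ℝ) ≤ (pGamma 0 L z + pGamma β L z)/2)]
    by_cases hzw : z = w
    · rw [if_pos hzw]
      have hlnn : 0 ≤ α + (1-α) * Real.sqrt (pGamma 0 L z * pGamma β L z) := by positivity
      apply (Real.le_sqrt hlnn (by positivity)).mpr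
      have e0 : (1-α)^2 * (pGamma 0 L z * pGamma β L z
          - Real.sqrt (pGamma 0 L z * pGamma β L z)^2) = 0 := by rw [hsq]; ring
      nlinarith [e0, mul_nonneg (mul_nonneg hα0 hu.le) (by linarith : (0:ℝ) ≤ pGamma 0 L z + pGamma β L z - 2 * Real.sqrt (pGamma 0 L z * pGamma β L z))]
    · rw [if_neg hzw]
      simp only [zero_add]
      rw [show (1-α) * pGamma 0 L z * ((1-α) * pGamma β L z)
          = (1-α)^2 * (pGamma 0 L z * pGamma β L z) by ring,
        Real.sqrt_mul (sq_nonneg _), Real.sqrt_sq hu.le]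
  calc 1 - (1-α) * (1 - (Real.sqrt (0.5 * (0.5 + β)) + Real.sqrt (0.5 * (0.5 - β))))
      = α + (1-α) * (Real.sqrt (0.5 * (0.5 + β)) + Real.sqrt (0.5 * (0.5 - β))) := by ring
    _ = ∑ z, ((if z = w then α else 0) + (1-α) * Real.sqrt (pGamma 0 L z * pGamma β L z)) := by
        rw [Finset.sum_add_distrib, Finset.sum_ite_eq' Finset.univ w (fun _ => α),
          ← Finset.mul_sum, pg_rho_sum hL hβ0 hβ1]
        simp
    _ ≤ _ := Finset.sum_le_sum (fun z _ => key z)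

-- min per-step bound
lemma min_step (w : Fin (L+1)) :
    1 - (1-α) * β
      ≤ ∑ z, min ((if z = w then α else 0) + (1-α) * pGamma 0 L z)
          ((if z = w then α else 0) + (1-α) * pGamma β L z) := by
  have hu : (0:ℝ) < 1 - α := by linarith
  have key : ∀ z, (if z = w then α else 0) + (1-α) * min (pGamma 0 L z) (pGamma β L z)
      ≤ min ((if z = w then α else 0) + (1-α) * pGamma 0 L z)
          ((if z = w then α else 0) + (1-α) * pGamma β L z) := by
    intro z
    apply le_min
    · have : min (pGamma 0 L z) (pGamma β L z) ≤ pGamma 0 L z := min_le_left _ _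
      nlinarith
    · have : min (pGamma 0 L z) (pGamma β L z) ≤ pGamma β L z := min_le_right _ _
      nlinarith
  calc 1 - (1-α) * β = α + (1-α) * (1 - β) := by ring
    _ = ∑ z, ((if z = w then α else 0) + (1-α) * min (pGamma 0 L z) (pGamma β L z)) := by
        rw [Finset.sum_add_distrib, Finset.sum_ite_eq' Finset.univ w (fun _ => α),
          ← Finset.mul_sum, pg_min_sum hL hβ0 hβ1]
        simp
    _ ≤ _ := Finset.sum_le_sum (fun z _ => key z)

end Steps

section Ind
open Real
variable {L : ℕ} {α β : ℝ}
  (hα0 : 0 ≤ α) (hα1 : α < 1) (hβ0 : 0 < β) (hβ1 : β < 0.5) (hL : 1 ≤ L)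

lemma pg_sum_any (hL : 1 ≤ L) (γ : ℝ) : ∑ z, pGamma γ L z = 1 := by
  have hLp : (0:ℝ) < L := by exact_mod_cast hL
  rw [sum_fin _ ((0.5 - γ)/L) (fun i => pg_succ γ i), pg_zero]
  field_simp
  ring

include hα0 hα1 hβ0 hβ1 hL

lemma P1_pos {n : ℕ} (x : Fin n → Fin (L+1)) : 0 < stickyProb α (pGamma 0 L) x :=
  sticky_pos α _ hα0 hα1 (fun z => (pg_pos hL hβ0 hβ1 z).2) x

lemma P2_pos {n : ℕ} (x : Fin n → Fin (L+1)) : 0 < stickyProb α (pGamma β L) x :=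
  sticky_pos α _ hα0 hα1 (fun z => (pg_pos hL hβ0 hβ1 z).1) x

lemma kl_ind : ∀ n, 1 ≤ n →
    ∑ x : Fin n → Fin (L+1), stickyProb α (pGamma 0 L) x *
      Real.log (stickyProb α (pGamma 0 L) x / stickyProb α (pGamma β L) x)
    ≤ (1 + ((n:ℝ)-1)*(1-α)) *
        (∑ z, pGamma 0 L z * Real.log (pGamma 0 L z / pGamma β L z)) := by
  intro n hn
  induction n, hn using Nat.le_induction with
  | base =>
    rw [Fintype.sum_equiv (Equiv.funUnique (Fin 1) (Fin (L+1)))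
      _ (fun z => pGamma 0 L z * Real.log (pGamma 0 L z / pGamma β L z))
      (fun x => by simp [sticky_one, Fin.default_eq_zero])]
    norm_num
  | succ n hn ih =>
    have hu : (0:ℝ) < 1 - α := by linarith
    rw [sum_snoc]
    have main : ∀ y : Fin n → Fin (L+1),
        ∑ z, stickyProb α (pGamma 0 L) (Fin.snoc y z) *
          Real.log (stickyProb α (pGamma 0 L) (Fin.snoc y z)
            / stickyProb α (pGamma β L) (Fin.snoc y z))
        ≤ stickyProb α (pGamma 0 L) y *
            Real.log (stickyProb α (pGamma 0 L) y / stickyProb α (pGamma β L) y)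
          + stickyProb α (pGamma 0 L) y *
            ((1-α) * ∑ z, pGamma 0 L z * Real.log (pGamma 0 L z / pGamma β L z)) := by
      intro y
      have hP1 := P1_pos hα0 hα1 hβ0 hβ1 hL y
      have hP2 := P2_pos hα0 hα1 hβ0 hβ1 hL y
      set w : Fin (L+1) := y ⟨n-1, by omega⟩ with hw
      have hT1 : ∀ z, 0 < (if z = w then α else 0) + (1-α) * pGamma 0 L z :=
        fun z => trans_pos hα0 hα1 (fun z => (pg_pos hL hβ0 hβ1 z).2) w z
      have hT2 : ∀ z, 0 < (if z = w then α else 0) + (1-α) * pGamma β L z :=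
        fun z => trans_pos hα0 hα1 (fun z => (pg_pos hL hβ0 hβ1 z).1) w z
      have step1 : ∀ z, stickyProb α (pGamma 0 L) (Fin.snoc y z) *
          Real.log (stickyProb α (pGamma 0 L) (Fin.snoc y z)
            / stickyProb α (pGamma β L) (Fin.snoc y z))
          = stickyProb α (pGamma 0 L) y * ((if z = w then α else 0) + (1-α) * pGamma 0 L z) *
            (Real.log (stickyProb α (pGamma 0 L) y / stickyProb α (pGamma β L) y)
             + Real.log (((if z = w then α else 0) + (1-α) * pGamma 0 L z)
                / ((if z = w then α else 0) + (1-α) * pGamma β L z))) := by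
        intro z
        rw [sticky_snoc α _ (by omega) y z, sticky_snoc α _ (by omega) y z, ← hw]
        rw [show stickyProb α (pGamma 0 L) y * ((if z = w then α else 0) + (1-α) * pGamma 0 L z)
              / (stickyProb α (pGamma β L) y * ((if z = w then α else 0) + (1-α) * pGamma β L z))
            = (stickyProb α (pGamma 0 L) y / stickyProb α (pGamma β L) y)
              * (((if z = w then α else 0) + (1-α) * pGamma 0 L z)
                / ((if z = w then α else 0) + (1-α) * pGamma β L z)) from
          (div_mul_div_comm _ _ _ _).symm]
        rw [Real.log_mul (ne_of_gt (div_pos hP1 hP2)) (ne_of_gt (div_pos (hT1 z) (hT2 z)))]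
      calc ∑ z, stickyProb α (pGamma 0 L) (Fin.snoc y z) *
            Real.log (stickyProb α (pGamma 0 L) (Fin.snoc y z)
              / stickyProb α (pGamma β L) (Fin.snoc y z))
          = stickyProb α (pGamma 0 L) y *
              Real.log (stickyProb α (pGamma 0 L) y / stickyProb α (pGamma β L) y) *
              (∑ z, ((if z = w then α else 0) + (1-α) * pGamma 0 L z))
            + stickyProb α (pGamma 0 L) y *
              (∑ z, ((if z = w then α else 0) + (1-α) * pGamma 0 L z) *
                Real.log (((if z = w then α else 0) + (1-α) * pGamma 0 L z)
                  / ((if z = w then α else 0) + (1-α) * pGamma β L z))) := by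
            rw [Finset.mul_sum, Finset.mul_sum, ← Finset.sum_add_distrib]
            refine Finset.sum_congr rfl (fun z _ => ?_)
            rw [step1 z]
            ring
        _ = stickyProb α (pGamma 0 L) y *
              Real.log (stickyProb α (pGamma 0 L) y / stickyProb α (pGamma β L) y)
            + stickyProb α (pGamma 0 L) y *
              (∑ z, ((if z = w then α else 0) + (1-α) * pGamma 0 L z) *
                Real.log (((if z = w then α else 0) + (1-α) * pGamma 0 L z)
                  / ((if z = w then α else 0) + (1-α) * pGamma β L z))) := by
            rw [sum_trans α _ (pg_sum_any hL 0) w, mul_one]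
        _ ≤ _ := by
            have := kl_step hα0 hα1 hβ0 hβ1 hL w
            have h2 := mul_le_mul_of_nonneg_left this hP1.le
            linarith
    calc ∑ y : Fin n → Fin (L+1), ∑ z, stickyProb α (pGamma 0 L) (Fin.snoc y z) *
            Real.log (stickyProb α (pGamma 0 L) (Fin.snoc y z)
              / stickyProb α (pGamma β L) (Fin.snoc y z))
        ≤ ∑ y : Fin n → Fin (L+1),
            (stickyProb α (pGamma 0 L) y *
              Real.log (stickyProb α (pGamma 0 L) y / stickyProb α (pGamma β L) y)
            + stickyProb α (pGamma 0 L) y *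
              ((1-α) * ∑ z, pGamma 0 L z * Real.log (pGamma 0 L z / pGamma β L z))) :=
          Finset.sum_le_sum (fun y _ => main y)
      _ = (∑ y : Fin n → Fin (L+1), stickyProb α (pGamma 0 L) y *
              Real.log (stickyProb α (pGamma 0 L) y / stickyProb α (pGamma β L) y))
          + (∑ y : Fin n → Fin (L+1), stickyProb α (pGamma 0 L) y) *
              ((1-α) * ∑ z, pGamma 0 L z * Real.log (pGamma 0 L z / pGamma β L z)) := by
          rw [Finset.sum_add_distrib, Finset.sum_mul]
      _ ≤ (1 + ((n:ℝ)-1)*(1-α)) *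
            (∑ z, pGamma 0 L z * Real.log (pGamma 0 L z / pGamma β L z))
          + 1 * ((1-α) * ∑ z, pGamma 0 L z * Real.log (pGamma 0 L z / pGamma β L z)) := by
          rw [sticky_sum_one α _ hn (pg_sum_any hL 0)]
          exact add_le_add ih le_rfl
      _ = (1 + (((n+1:ℕ):ℝ)-1)*(1-α)) *
            (∑ z, pGamma 0 L z * Real.log (pGamma 0 L z / pGamma β L z)) := by
          push_cast
          ring

lemma hell_ind : ∀ n, 1 ≤ n →
    (Real.sqrt (0.5 * (0.5 + β)) + Real.sqrt (0.5 * (0.5 - β)))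
      * (1 - (1-α) * (1 - (Real.sqrt (0.5 * (0.5 + β)) + Real.sqrt (0.5 * (0.5 - β)))))^(n-1)
    ≤ ∑ x : Fin n → Fin (L+1),
        Real.sqrt (stickyProb α (pGamma 0 L) x * stickyProb α (pGamma β L) x) := by
  have hρ0 : (0:ℝ) ≤ Real.sqrt (0.5 * (0.5 + β)) + Real.sqrt (0.5 * (0.5 - β)) :=
    add_nonneg (Real.sqrt_nonneg _) (Real.sqrt_nonneg _)
  have hq0 : (0:ℝ) ≤ 1 - (1-α) * (1 - (Real.sqrt (0.5 * (0.5 + β)) + Real.sqrt (0.5 * (0.5 - β)))) := by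
    have h1 : Real.sqrt (0.5 * (0.5 - β)) ≤ 1 := by
      rw [show (1:ℝ) = Real.sqrt 1 from (Real.sqrt_one).symm]
      apply Real.sqrt_le_sqrt
      nlinarith
    nlinarith [Real.sqrt_nonneg (0.5 * (0.5 + β)), Real.sqrt_nonneg (0.5 * (0.5 - β))]
  intro n hn
  induction n, hn using Nat.le_induction with
  | base =>
    simp only [Nat.sub_self, pow_zero, mul_one]
    rw [Fintype.sum_equiv (Equiv.funUnique (Fin 1) (Fin (L+1)))
      _ (fun z => Real.sqrt (pGamma 0 L z * pGamma β L z))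
      (fun x => by simp [sticky_one, Fin.default_eq_zero])]
    rw [pg_rho_sum hL hβ0 hβ1]
  | succ n hn ih =>
    rw [sum_snoc]
    have main : ∀ y : Fin n → Fin (L+1),
        Real.sqrt (stickyProb α (pGamma 0 L) y * stickyProb α (pGamma β L) y)
          * (1 - (1-α) * (1 - (Real.sqrt (0.5 * (0.5 + β)) + Real.sqrt (0.5 * (0.5 - β)))))
        ≤ ∑ z, Real.sqrt (stickyProb α (pGamma 0 L) (Fin.snoc y z)
            * stickyProb α (pGamma β L) (Fin.snoc y z)) := by
      intro y
      set w : Fin (L+1) := y ⟨n-1, by omega⟩ with hw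
      have step1 : ∀ z, Real.sqrt (stickyProb α (pGamma 0 L) (Fin.snoc y z)
            * stickyProb α (pGamma β L) (Fin.snoc y z))
          = Real.sqrt (stickyProb α (pGamma 0 L) y * stickyProb α (pGamma β L) y)
            * Real.sqrt (((if z = w then α else 0) + (1-α) * pGamma 0 L z)
              * ((if z = w then α else 0) + (1-α) * pGamma β L z)) := by
        intro z
        rw [sticky_snoc α _ (by omega) y z, sticky_snoc α _ (by omega) y z, ← hw]
        rw [show stickyProb α (pGamma 0 L) y * ((if z = w then α else 0) + (1-α) * pGamma 0 L z)
              * (stickyProb α (pGamma β L) y * ((if z = w then α else 0) + (1-α) * pGamma β L z))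
            = (stickyProb α (pGamma 0 L) y * stickyProb α (pGamma β L) y)
              * (((if z = w then α else 0) + (1-α) * pGamma 0 L z)
                * ((if z = w then α else 0) + (1-α) * pGamma β L z)) from by ring]
        exact Real.sqrt_mul (mul_nonneg (P1_pos hα0 hα1 hβ0 hβ1 hL y).le
          (P2_pos hα0 hα1 hβ0 hβ1 hL y).le) _
      calc Real.sqrt (stickyProb α (pGamma 0 L) y * stickyProb α (pGamma β L) y)
            * (1 - (1-α) * (1 - (Real.sqrt (0.5 * (0.5 + β)) + Real.sqrt (0.5 * (0.5 - β)))))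
          ≤ Real.sqrt (stickyProb α (pGamma 0 L) y * stickyProb α (pGamma β L) y)
            * ∑ z, Real.sqrt (((if z = w then α else 0) + (1-α) * pGamma 0 L z)
              * ((if z = w then α else 0) + (1-α) * pGamma β L z)) :=
            mul_le_mul_of_nonneg_left (hell_step hα0 hα1 hβ0 hβ1 hL w) (Real.sqrt_nonneg _)
        _ = _ := by
            rw [Finset.mul_sum]
            exact Finset.sum_congr rfl (fun z _ => (step1 z).symm)
    calc (Real.sqrt (0.5 * (0.5 + β)) + Real.sqrt (0.5 * (0.5 - β)))
          * (1 - (1-α) * (1 - (Real.sqrt (0.5 * (0.5 + β)) + Real.sqrt (0.5 * (0.5 - β)))))^(n+1-1)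
        = ((Real.sqrt (0.5 * (0.5 + β)) + Real.sqrt (0.5 * (0.5 - β)))
            * (1 - (1-α) * (1 - (Real.sqrt (0.5 * (0.5 + β)) + Real.sqrt (0.5 * (0.5 - β)))))^(n-1))
          * (1 - (1-α) * (1 - (Real.sqrt (0.5 * (0.5 + β)) + Real.sqrt (0.5 * (0.5 - β))))) := by
          rw [show n+1-1 = (n-1)+1 from by omega]
          ring
      _ ≤ (∑ y : Fin n → Fin (L+1),
            Real.sqrt (stickyProb α (pGamma 0 L) y * stickyProb α (pGamma β L) y))
          * (1 - (1-α) * (1 - (Real.sqrt (0.5 * (0.5 + β)) + Real.sqrt (0.5 * (0.5 - β))))) :=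
          mul_le_mul_of_nonneg_right ih hq0
      _ = ∑ y : Fin n → Fin (L+1),
            Real.sqrt (stickyProb α (pGamma 0 L) y * stickyProb α (pGamma β L) y)
            * (1 - (1-α) * (1 - (Real.sqrt (0.5 * (0.5 + β)) + Real.sqrt (0.5 * (0.5 - β))))) :=
          Finset.sum_mul _ _ _
      _ ≤ _ := Finset.sum_le_sum (fun y _ => main y)

lemma sticky_min_ind : ∀ n, 1 ≤ n →
    (1 - β) * (1 - (1-α) * β)^(n-1)
    ≤ ∑ x : Fin n → Fin (L+1),
        min (stickyProb α (pGamma 0 L) x) (stickyProb α (pGamma β L) x) := by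
  have hq0 : (0:ℝ) ≤ 1 - (1-α) * β := by nlinarith
  intro n hn
  induction n, hn using Nat.le_induction with
  | base =>
    simp only [Nat.sub_self, pow_zero, mul_one]
    rw [Fintype.sum_equiv (Equiv.funUnique (Fin 1) (Fin (L+1)))
      _ (fun z => min (pGamma 0 L z) (pGamma β L z))
      (fun x => by simp [sticky_one, Fin.default_eq_zero])]
    rw [pg_min_sum hL hβ0 hβ1]
  | succ n hn ih =>
    rw [sum_snoc]
    have main : ∀ y : Fin n → Fin (L+1),
        min (stickyProb α (pGamma 0 L) y) (stickyProb α (pGamma β L) y) * (1 - (1-α) * β)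
        ≤ ∑ z, min (stickyProb α (pGamma 0 L) (Fin.snoc y z))
            (stickyProb α (pGamma β L) (Fin.snoc y z)) := by
      intro y
      set w : Fin (L+1) := y ⟨n-1, by omega⟩ with hw
      have hmnn : 0 ≤ min (stickyProb α (pGamma 0 L) y) (stickyProb α (pGamma β L) y) :=
        le_min (P1_pos hα0 hα1 hβ0 hβ1 hL y).le (P2_pos hα0 hα1 hβ0 hβ1 hL y).le
      have step1 : ∀ z, min (stickyProb α (pGamma 0 L) y) (stickyProb α (pGamma β L) y)
            * min ((if z = w then α else 0) + (1-α) * pGamma 0 L z)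
                ((if z = w then α else 0) + (1-α) * pGamma β L z)
          ≤ min (stickyProb α (pGamma 0 L) (Fin.snoc y z))
              (stickyProb α (pGamma β L) (Fin.snoc y z)) := by
        intro z
        rw [sticky_snoc α _ (by omega) y z, sticky_snoc α _ (by omega) y z, ← hw]
        apply le_min
        · exact mul_le_mul (min_le_left _ _) (min_le_left _ _)
            (le_min (trans_pos hα0 hα1 (fun z => (pg_pos hL hβ0 hβ1 z).2) w z).le
              (trans_pos hα0 hα1 (fun z => (pg_pos hL hβ0 hβ1 z).1) w z).le)
            (P1_pos hα0 hα1 hβ0 hβ1 hL y).le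
        · exact mul_le_mul (min_le_right _ _) (min_le_right _ _)
            (le_min (trans_pos hα0 hα1 (fun z => (pg_pos hL hβ0 hβ1 z).2) w z).le
              (trans_pos hα0 hα1 (fun z => (pg_pos hL hβ0 hβ1 z).1) w z).le)
            (P2_pos hα0 hα1 hβ0 hβ1 hL y).le
      calc min (stickyProb α (pGamma 0 L) y) (stickyProb α (pGamma β L) y) * (1 - (1-α) * β)
          ≤ min (stickyProb α (pGamma 0 L) y) (stickyProb α (pGamma β L) y)
            * ∑ z, min ((if z = w then α else 0) + (1-α) * pGamma 0 L z)
                ((if z = w then α else 0) + (1-α) * pGamma β L z) :=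
            mul_le_mul_of_nonneg_left (min_step hα0 hα1 hβ0 hβ1 hL w) hmnn
        _ = ∑ z, min (stickyProb α (pGamma 0 L) y) (stickyProb α (pGamma β L) y)
              * min ((if z = w then α else 0) + (1-α) * pGamma 0 L z)
                  ((if z = w then α else 0) + (1-α) * pGamma β L z) := Finset.mul_sum _ _ _
        _ ≤ _ := Finset.sum_le_sum (fun z _ => step1 z)
    calc (1 - β) * (1 - (1-α) * β)^(n+1-1)
        = ((1 - β) * (1 - (1-α) * β)^(n-1)) * (1 - (1-α) * β) := by
          rw [show n+1-1 = (n-1)+1 from by omega]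
          ring
      _ ≤ (∑ y : Fin n → Fin (L+1),
            min (stickyProb α (pGamma 0 L) y) (stickyProb α (pGamma β L) y)) * (1 - (1-α) * β) :=
          mul_le_mul_of_nonneg_right ih hq0
      _ = ∑ y : Fin n → Fin (L+1),
            min (stickyProb α (pGamma 0 L) y) (stickyProb α (pGamma β L) y) * (1 - (1-α) * β) :=
          Finset.sum_mul _ _ _
      _ ≤ _ := Finset.sum_le_sum (fun y _ => main y)

end Ind

section Final
open Real

lemma sqrt_quarter : Real.sqrt 0.25 = 0.5 := by
  rw [show (0.25:ℝ) = 0.5^2 by norm_num]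
  exact Real.sqrt_sq (by norm_num)

lemma rho_sq {β : ℝ} (hβ0 : 0 < β) (hβ1 : β < 0.5) :
    (Real.sqrt (0.5*(0.5+β)) + Real.sqrt (0.5*(0.5-β)))^2 = 0.5 + Real.sqrt (0.25 - β^2) := by
  have ha : (0:ℝ) ≤ 0.5*(0.5+β) := by nlinarith
  have hb : (0:ℝ) ≤ 0.5*(0.5-β) := by nlinarith
  have e : (Real.sqrt (0.5*(0.5+β)) + Real.sqrt (0.5*(0.5-β)))^2
      = Real.sqrt (0.5*(0.5+β))^2 + Real.sqrt (0.5*(0.5-β))^2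
        + 2*(Real.sqrt (0.5*(0.5+β)) * Real.sqrt (0.5*(0.5-β))) := by ring
  rw [e, Real.sq_sqrt ha, Real.sq_sqrt hb, ← Real.sqrt_mul ha,
    show 0.5*(0.5+β)*(0.5*(0.5-β)) = 0.25*(0.25-β^2) from by ring,
    Real.sqrt_mul (by norm_num) _, sqrt_quarter]
  ring

lemma beta_rho {β : ℝ} (hβ0 : 0 < β) (hβ1 : β < 0.5) :
    β^2 = (Real.sqrt (0.5*(0.5+β)) + Real.sqrt (0.5*(0.5-β)))^2
      * (1 - (Real.sqrt (0.5*(0.5+β)) + Real.sqrt (0.5*(0.5-β)))^2) := by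
  have hσ : (Real.sqrt (0.25 - β^2))^2 = 0.25-β^2 := Real.sq_sqrt (by nlinarith)
  rw [rho_sq hβ0 hβ1]
  nlinarith [hσ]

lemma rho_lt_one {β : ℝ} (hβ0 : 0 < β) (hβ1 : β < 0.5) :
    Real.sqrt (0.5*(0.5+β)) + Real.sqrt (0.5*(0.5-β)) < 1 := by
  have hσ : (Real.sqrt (0.25 - β^2))^2 = 0.25-β^2 := Real.sq_sqrt (by nlinarith)
  have hσ0 : 0 ≤ Real.sqrt (0.25 - β^2) := Real.sqrt_nonneg _
  have hσ5 : Real.sqrt (0.25 - β^2) < 0.5 := by nlinarith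
  have h2 := rho_sq hβ0 hβ1
  have hρ0 : (0:ℝ) ≤ Real.sqrt (0.5*(0.5+β)) + Real.sqrt (0.5*(0.5-β)) :=
    add_nonneg (Real.sqrt_nonneg _) (Real.sqrt_nonneg _)
  nlinarith

lemma rho_lb {β : ℝ} (hβ0 : 0 < β) (hβ1 : β < 0.5) (h49 : β ≤ 0.49) :
    0.7742 ≤ Real.sqrt (0.5*(0.5+β)) + Real.sqrt (0.5*(0.5-β)) := by
  have hσ : (Real.sqrt (0.25 - β^2))^2 = 0.25-β^2 := Real.sq_sqrt (by nlinarith)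
  have hσ0 : 0 ≤ Real.sqrt (0.25 - β^2) := Real.sqrt_nonneg _
  have hσlb : 0.0994 ≤ Real.sqrt (0.25 - β^2) := by nlinarith
  have h2 := rho_sq hβ0 hβ1
  have hρ0 : (0:ℝ) ≤ Real.sqrt (0.5*(0.5+β)) + Real.sqrt (0.5*(0.5-β)) :=
    add_nonneg (Real.sqrt_nonneg _) (Real.sqrt_nonneg _)
  nlinarith

lemma hell_scalar {β ρ u : ℝ} (hρl : 0.7742 ≤ ρ) (hρ1 : ρ < 1) (hu0 : 0 ≤ u) (hu1 : u ≤ 1)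
    (hβρ : β^2 = ρ^2*(1-ρ^2)) (m : ℕ) :
    1 - (ρ*(1-u*(1-ρ))^m)^2 ≤ β^2*(2 + u*(m:ℝ)) := by
  have hh0 : 0 < 1-ρ := by linarith
  have huh : u*(1-ρ) ≤ 1 := by nlinarith
  have hq0 : (0:ℝ) ≤ 1 - u*(1-ρ) := by linarith
  have hA0 : 0 ≤ ρ*(1-u*(1-ρ))^m := mul_nonneg (by linarith) (pow_nonneg hq0 m)
  have hc0 : 0 ≤ u*(m:ℝ) := mul_nonneg hu0 (Nat.cast_nonneg m)
  have hB : 1 - (m:ℝ)*(u*(1-ρ)) ≤ (1-u*(1-ρ))^m := by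
    have h := one_add_mul_le_pow (show (-2:ℝ) ≤ -(u*(1-ρ)) by nlinarith) m
    calc 1 - (m:ℝ)*(u*(1-ρ)) = 1 + (m:ℝ)*(-(u*(1-ρ))) := by ring
      _ ≤ (1 + -(u*(1-ρ)))^m := h
      _ = (1-u*(1-ρ))^m := by ring_nf
  have hβK : β^2 = (ρ^2+ρ^3)*(1-ρ) := by rw [hβρ]; ring
  have hK0 : (0:ℝ) < ρ^2+ρ^3 := by nlinarith
  by_cases hx : (1-ρ)*(1+u*(m:ℝ)) ≤ 1
  · have hA1 : 1 - (1-ρ)*(1+u*(m:ℝ)) ≤ ρ*(1-u*(1-ρ))^m := by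
      have h1 : ρ*(1 - (m:ℝ)*(u*(1-ρ))) ≤ ρ*(1-u*(1-ρ))^m :=
        mul_le_mul_of_nonneg_left hB (by linarith)
      nlinarith [mul_nonneg hc0 (sq_nonneg (1-ρ))]
    have hgoal : 1 - (ρ*(1-u*(1-ρ))^m)^2 ≤ 1 - (1-(1-ρ)*(1+u*(m:ℝ)))^2 := by
      nlinarith [hA1, hA0]
    have hdisc := sc3 hρl hρ1.le
    have hQ : 0 ≤ (1-ρ)*(1+u*(m:ℝ))^2 - (2-(ρ^2+ρ^3))*(1+u*(m:ℝ))
        + (ρ^2+ρ^3) := by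
      nlinarith [sq_nonneg (2*(1-ρ)*(1+u*(m:ℝ)) - (2-(ρ^2+ρ^3)))]
    rw [hβK]
    nlinarith [hgoal, mul_nonneg hh0.le hQ]
  · push_neg at hx
    have h1 : 1 ≤ β^2*(2+u*(m:ℝ)) := by
      have h2 := sc4 hρl hρ1.le
      rw [hβK]
      nlinarith [mul_lt_mul_of_pos_left hx hK0]
    nlinarith [sq_nonneg (ρ*(1-u*(1-ρ))^m)]

lemma tv_sq {I : Type*} [Fintype I] (P1 P2 : I → ℝ) (h1 : ∀ x, 0 ≤ P1 x) (h2 : ∀ x, 0 ≤ P2 x)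
    (hs1 : ∑ x, P1 x = 1) (hs2 : ∑ x, P2 x = 1) :
    (∑ x, |P1 x - P2 x|)^2 ≤ 4*(1 - (∑ x, Real.sqrt (P1 x * P2 x))^2) := by
  have key : ∀ x, |P1 x - P2 x|
      = |Real.sqrt (P1 x) - Real.sqrt (P2 x)| * (Real.sqrt (P1 x) + Real.sqrt (P2 x)) := by
    intro x
    rw [← abs_of_nonneg (add_nonneg (Real.sqrt_nonneg (P1 x)) (Real.sqrt_nonneg (P2 x))),
      ← abs_mul]
    congr 1
    have e1 := Real.sq_sqrt (h1 x)
    have e2 := Real.sq_sqrt (h2 x)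
    linear_combination e2 - e1
  have CS := Finset.sum_mul_sq_le_sq_mul_sq Finset.univ
    (fun x => |Real.sqrt (P1 x) - Real.sqrt (P2 x)|) (fun x => Real.sqrt (P1 x) + Real.sqrt (P2 x))
  have e3 : ∑ x, |Real.sqrt (P1 x) - Real.sqrt (P2 x)|^2
      = 2 - 2*(∑ x, Real.sqrt (P1 x * P2 x)) := by
    have : ∀ x, |Real.sqrt (P1 x) - Real.sqrt (P2 x)|^2
        = P1 x + P2 x - 2*Real.sqrt (P1 x * P2 x) := by
      intro x
      rw [sq_abs, Real.sqrt_mul (h1 x)]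
      have e1 := Real.sq_sqrt (h1 x)
      have e2 := Real.sq_sqrt (h2 x)
      linear_combination e1 + e2
    rw [Finset.sum_congr rfl (fun x _ => this x), Finset.sum_sub_distrib,
      Finset.sum_add_distrib, hs1, hs2, ← Finset.mul_sum]
    ring
  have e4 : ∑ x, (Real.sqrt (P1 x) + Real.sqrt (P2 x))^2
      = 2 + 2*(∑ x, Real.sqrt (P1 x * P2 x)) := by
    have : ∀ x, (Real.sqrt (P1 x) + Real.sqrt (P2 x))^2
        = P1 x + P2 x + 2*Real.sqrt (P1 x * P2 x) := by
      intro x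
      rw [Real.sqrt_mul (h1 x)]
      have e1 := Real.sq_sqrt (h1 x)
      have e2 := Real.sq_sqrt (h2 x)
      linear_combination e1 + e2
    rw [Finset.sum_congr rfl (fun x _ => this x), Finset.sum_add_distrib,
      Finset.sum_add_distrib, hs1, hs2, ← Finset.mul_sum]
    ring
  rw [Finset.sum_congr rfl (fun x _ => key x)]
  calc (∑ x, |Real.sqrt (P1 x) - Real.sqrt (P2 x)| * (Real.sqrt (P1 x) + Real.sqrt (P2 x)))^2
      ≤ (∑ x, |Real.sqrt (P1 x) - Real.sqrt (P2 x)|^2)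
        * (∑ x, (Real.sqrt (P1 x) + Real.sqrt (P2 x))^2) := CS
    _ = 4*(1 - (∑ x, Real.sqrt (P1 x * P2 x))^2) := by rw [e3, e4]; ring

end Final

/-- For the laws `P1`, `P2` of the length-`n` stationary geometric-sticky Markov chains with
parameter `α` and base distributions `p(0,L)` and `p(β,L)`:
`D_KL(P1‖P2) ≤ -0.5·[1 + (n-1)(1-α)]·ln(1 - 4β²)` and consequently
`‖P1 - P2‖_TV ≤ √2·β·(1 + 0.5(n-1)(1-α))^{1/2}`. -/
theorem sticky_kl_and_tv_bound
    (α : ℝ) (hα0 : 0 ≤ α) (hα1 : α < 1) (β : ℝ) (hβ0 : 0 < β) (hβ1 : β < 0.5)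
    (L : ℕ) (hL : 1 ≤ L) (n : ℕ) (hn : 1 ≤ n) :
    (∑ x : Fin n → Fin (L + 1),
        stickyProb α (pGamma 0 L) x *
          Real.log (stickyProb α (pGamma 0 L) x / stickyProb α (pGamma β L) x)
      ≤ -0.5 * (1 + ((n : ℝ) - 1) * (1 - α)) * Real.log (1 - 4 * β ^ 2)) ∧
    ((1 / 2) * ∑ x : Fin n → Fin (L + 1),
        |stickyProb α (pGamma 0 L) x - stickyProb α (pGamma β L) x|
      ≤ Real.sqrt 2 * β * Real.sqrt (1 + 0.5 * ((n : ℝ) - 1) * (1 - α))) := by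
  have hcast : ((n - 1 : ℕ) : ℝ) = (n : ℝ) - 1 := by
    have := Nat.cast_sub hn (R := ℝ)
    simpa using this
  set c : ℝ := ((n : ℝ) - 1) * (1 - α) with hcdef
  have hc0 : 0 ≤ c := by
    apply mul_nonneg _ (by linarith)
    have : (1:ℝ) ≤ (n:ℝ) := by exact_mod_cast hn
    linarith
  constructor
  · have h := kl_ind hα0 hα1 hβ0 hβ1 hL n hn
    rw [pg_D hL hβ0 hβ1] at h
    calc ∑ x : Fin n → Fin (L + 1),
        stickyProb α (pGamma 0 L) x *
          Real.log (stickyProb α (pGamma 0 L) x / stickyProb α (pGamma β L) x)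
        ≤ (1 + ((n:ℝ)-1)*(1-α)) * (-(1/2) * Real.log (1 - 4*β^2)) := h
      _ = -0.5 * (1 + ((n : ℝ) - 1) * (1 - α)) * Real.log (1 - 4 * β ^ 2) := by
          norm_num; ring
  · -- TV part
    have hrhseq : Real.sqrt 2 * β * Real.sqrt (1 + 0.5 * ((n : ℝ) - 1) * (1 - α))
        = β * Real.sqrt (2 + c) := by
      rw [show (1:ℝ) + 0.5 * ((n : ℝ) - 1) * (1 - α) = (2+c)/2 by rw [hcdef]; ring,
        show (2:ℝ)+c = 2*((2+c)/2) by ring]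
      rw [Real.sqrt_mul (by norm_num) ((2+c)/2)]
      ring_nf
    rw [hrhseq]
    have hS0 : 0 ≤ ∑ x : Fin n → Fin (L + 1),
        |stickyProb α (pGamma 0 L) x - stickyProb α (pGamma β L) x| :=
      Finset.sum_nonneg (fun x _ => abs_nonneg _)
    have hP1s := sticky_sum_one α (pGamma 0 L) hn (pg_sum_any hL 0)
    have hP2s := sticky_sum_one α (pGamma β L) hn (pg_sum_any hL β)
    have hsqrteq : Real.sqrt (β^2 * (2+c)) = β * Real.sqrt (2+c) := by
      rw [Real.sqrt_mul (sq_nonneg β), Real.sqrt_sq hβ0.le]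
    by_cases h49 : β ≤ 0.49
    · -- Hellinger branch
      have hρl := rho_lb hβ0 hβ1 h49
      have hρ1 := rho_lt_one hβ0 hβ1
      have hβρ := beta_rho hβ0 hβ1
      have hsc := hell_scalar hρl hρ1 (by linarith : (0:ℝ) ≤ 1-α) (by linarith : (1:ℝ)-α ≤ 1)
        hβρ (n-1)
      rw [hcast] at hsc
      have hA := hell_ind hα0 hα1 hβ0 hβ1 hL n hn
      have hAnn : 0 ≤ (Real.sqrt (0.5 * (0.5 + β)) + Real.sqrt (0.5 * (0.5 - β)))
          * (1 - (1-α) * (1 - (Real.sqrt (0.5 * (0.5 + β)) + Real.sqrt (0.5 * (0.5 - β)))))^(n-1) := by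
        apply mul_nonneg (by positivity)
        apply pow_nonneg
        nlinarith
      have htv := tv_sq (stickyProb α (pGamma 0 L)) (stickyProb α (pGamma β L))
        (fun x => (P1_pos hα0 hα1 hβ0 hβ1 hL x).le) (fun x => (P2_pos hα0 hα1 hβ0 hβ1 hL x).le)
        hP1s hP2s
      have hchain : (∑ x : Fin n → Fin (L + 1),
          |stickyProb α (pGamma 0 L) x - stickyProb α (pGamma β L) x|)^2
          ≤ 4 * (β^2 * (2 + (1-α)*((n:ℝ)-1))) := by
        nlinarith [htv, hA, hAnn, hsc]
      apply (Real.le_sqrt (by linarith) (by positivity)).mpr ?_ |>.trans_eq hsqrteq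
      calc ((1/2) * ∑ x : Fin n → Fin (L + 1),
          |stickyProb α (pGamma 0 L) x - stickyProb α (pGamma β L) x|)^2
          = (∑ x : Fin n → Fin (L + 1),
              |stickyProb α (pGamma 0 L) x - stickyProb α (pGamma β L) x|)^2 / 4 := by ring
        _ ≤ β^2 * (2 + c) := by rw [hcdef]; nlinarith [hchain]
    · -- coupling branch
      push_neg at h49
      have hmin := sticky_min_ind hα0 hα1 hβ0 hβ1 hL n hn
      have hminnn : 0 ≤ ∑ x : Fin n → Fin (L + 1),
          min (stickyProb α (pGamma 0 L) x) (stickyProb α (pGamma β L) x) :=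
        Finset.sum_nonneg (fun x _ => le_min (P1_pos hα0 hα1 hβ0 hβ1 hL x).le
          (P2_pos hα0 hα1 hβ0 hβ1 hL x).le)
      have hSeq : ∑ x : Fin n → Fin (L + 1),
          |stickyProb α (pGamma 0 L) x - stickyProb α (pGamma β L) x|
          = 2 - 2 * ∑ x : Fin n → Fin (L + 1),
              min (stickyProb α (pGamma 0 L) x) (stickyProb α (pGamma β L) x) := by
        have e : ∀ x : Fin n → Fin (L+1),
            |stickyProb α (pGamma 0 L) x - stickyProb α (pGamma β L) x|
            = stickyProb α (pGamma 0 L) x + stickyProb α (pGamma β L) x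
              - 2 * min (stickyProb α (pGamma 0 L) x) (stickyProb α (pGamma β L) x) := by
          intro x
          rcases le_total (stickyProb α (pGamma 0 L) x) (stickyProb α (pGamma β L) x) with h | h
          · rw [abs_of_nonpos (by linarith), min_eq_left h]; ring
          · rw [abs_of_nonneg (by linarith), min_eq_right h]; ring
        rw [Finset.sum_congr rfl (fun x _ => e x), Finset.sum_sub_distrib,
          Finset.sum_add_distrib, hP1s, hP2s, ← Finset.mul_sum]
        ring
      by_cases hT : 1 ≤ β^2 * (2+c)
      · have h1 : (1/2) * ∑ x : Fin n → Fin (L + 1),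
            |stickyProb α (pGamma 0 L) x - stickyProb α (pGamma β L) x| ≤ 1 := by
          rw [hSeq]; linarith
        have h2 : (1:ℝ) ≤ β * Real.sqrt (2+c) := by
          rw [← hsqrteq]
          have h3 := Real.sqrt_le_sqrt (show (1:ℝ) ≤ β^2*(2+c) by linarith)
          simpa using h3
        exact h1.trans h2
      · push_neg at hT
        set R := Real.sqrt (2+c) with hRdef
        have hR0 : 0 ≤ R := Real.sqrt_nonneg _
        have hR2 : R^2 = 2+c := Real.sq_sqrt (by linarith)
        have hhalf : (1/2) * ∑ x : Fin n → Fin (L + 1),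
            |stickyProb α (pGamma 0 L) x - stickyProb α (pGamma β L) x|
            ≤ 1 - (1-β) * (1-(1-α)*β)^(n-1) := by
          rw [hSeq]; linarith [hmin]
        have hq0 : (0:ℝ) ≤ 1-(1-α)*β := by nlinarith
        have hmc : ((n-1:ℕ):ℝ) * ((1-α)*β) = c * β := by rw [hcast, hcdef]; ring
        by_cases hc1 : c ≤ 1
        · -- Bernoulli
          have hB : 1 - c*β ≤ (1-(1-α)*β)^(n-1) := by
            have h := one_add_mul_le_pow (show (-2:ℝ) ≤ -((1-α)*β) by nlinarith) (n-1)
            calc 1 - c*β = 1 + ((n-1:ℕ):ℝ) * (-((1-α)*β)) := by rw [← hmc]; ring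
              _ ≤ (1 + -((1-α)*β))^(n-1) := h
              _ = (1-(1-α)*β)^(n-1) := by ring_nf
          have hs1 := sc1 h49.le hβ1.le hc0 hc1
          have hle : 1 + c*(1-β) ≤ R := by
            nlinarith [hs1, hR2, hR0]
          calc (1/2) * ∑ x : Fin n → Fin (L + 1),
              |stickyProb α (pGamma 0 L) x - stickyProb α (pGamma β L) x|
              ≤ 1 - (1-β) * (1-(1-α)*β)^(n-1) := hhalf
            _ ≤ 1 - (1-β) * (1 - c*β) := by nlinarith [hB]
            _ = β * (1 + c*(1-β)) := by ring
            _ ≤ β * R := mul_le_mul_of_nonneg_left hle hβ0.le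
        · push_neg at hc1
          have hm2 : 2 ≤ n - 1 := by
            have h1' : (1:ℝ) < ((n-1:ℕ):ℝ) := by
              rw [hcast]
              nlinarith
            have h2' : 1 < n - 1 := by exact_mod_cast h1'
            omega
          have ha0 : (0:ℝ) ≤ (1-α)*β := by nlinarith
          have ha1 : (1-α)*β ≤ 1 := by nlinarith
          have ham : (1-α)*β * ((n-1:ℕ):ℝ) ≤ 3/2 := by
            have hcb : c * β ≤ 3/2 := by nlinarith
            rw [show (1-α)*β * ((n-1:ℕ):ℝ) = ((n-1:ℕ):ℝ) * ((1-α)*β) by ring, hmc]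
            exact hcb
          have hPL := pow_lb ha0 ha1 (n-1) hm2 ham
          have hPL' : (1 - c*β/2)^2 ≤ (1-(1-α)*β)^(n-1) := by
            rw [show 1 - c*β/2 = 1 - (1-α)*β*((n-1:ℕ):ℝ)/2 by
              rw [show (1-α)*β*((n-1:ℕ):ℝ) = ((n-1:ℕ):ℝ) * ((1-α)*β) by ring, hmc]]
            exact hPL
          have hs2 := sc2 h49.le hβ1.le hc1.le hT.le hR0 hR2
          calc (1/2) * ∑ x : Fin n → Fin (L + 1),
              |stickyProb α (pGamma 0 L) x - stickyProb α (pGamma β L) x|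
              ≤ 1 - (1-β) * (1-(1-α)*β)^(n-1) := hhalf
            _ ≤ 1 - (1-β) * (1 - c*β/2)^2 := by nlinarith [hPL']
            _ ≤ β * R := hs2
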